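/- In the free product (coproduct) setting: the group D with presentation ⟨a, b, a', b' | a² = b² = (a')² = (b')² = 1, [a,a'] = [b,b'] = 1, ab = b'a = ba' = a'b', ba = a'b = ab' = b'a'⟩ is isomorphic to the group ⟨a, b | a² = b² = (ab)⁴ = 1⟩, via the map sending a' ↦ b·a·b and b' ↦ a·b·a. -/
import Mathlib


open DihedralGroup

def Drels : Set (FreeGroup (Fin 4)) :=
  let a : FreeGroup (Fin 4) := FreeGroup.of 0
  let b : FreeGroup (Fin 4) := FreeGroup.of 1
  let a' : FreeGroup (Fin 4) := FreeGroup.of 2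
  let b' : FreeGroup (Fin 4) := FreeGroup.of 3
  {a * a, b * b, a' * a', b' * b',
   a * a' * a⁻¹ * a'⁻¹, b * b' * b⁻¹ * b'⁻¹,
   (a * b) * (b' * a)⁻¹, (a * b) * (b * a')⁻¹, (a * b) * (a' * b')⁻¹,
   (b * a) * (a' * b)⁻¹, (b * a) * (a * b')⁻¹, (b * a) * (b' * a')⁻¹}

namespace DAux

abbrev D := PresentedGroup Drels

def A : D := PresentedGroup.of 0
def B : D := PresentedGroup.of 1
def A' : D := PresentedGroup.of 2
def B' : D := PresentedGroup.of 3
def x : D := A * B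

lemma relOne {w : FreeGroup (Fin 4)} (hw : w ∈ Drels) :
    PresentedGroup.mk Drels w = 1 :=
  (QuotientGroup.eq_one_iff w).mpr (Subgroup.subset_normalClosure hw)

lemma hA : A * A = 1 := relOne (by simp [Drels])
lemma hB : B * B = 1 := relOne (by simp [Drels])
lemma hBsq : B' * B' = 1 := relOne (by simp [Drels])
lemma hcommB : B * B' * B⁻¹ * B'⁻¹ = 1 := relOne (by simp [Drels])
lemma hr1 : (A * B) * (B' * A)⁻¹ = 1 := relOne (by simp [Drels])
lemma hr2 : (A * B) * (B * A')⁻¹ = 1 := relOne (by simp [Drels])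
lemma hr5 : (B * A) * (A * B')⁻¹ = 1 := relOne (by simp [Drels])

lemma hAinv : A⁻¹ = A := inv_eq_of_mul_eq_one_right hA
lemma hBinv : B⁻¹ = B := inv_eq_of_mul_eq_one_right hB

lemma hAB_B'A : A * B = B' * A := mul_inv_eq_one.mp hr1
lemma hAB_BA' : A * B = B * A' := mul_inv_eq_one.mp hr2
lemma hBA_AB' : B * A = A * B' := mul_inv_eq_one.mp hr5

lemma hBB' : B * B' = B' * B := by
  have h : B * B' * B⁻¹ = B' := mul_inv_eq_one.mp hcommB
  calc B * B' = (B * B' * B⁻¹) * B := by group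
    _ = B' * B := by rw [h]

lemma hx2 : x * x = B' * B := by
  calc x * x = (A * B) * (A * B) := rfl
    _ = (B' * A) * (A * B) := by rw [hAB_B'A]
    _ = B' * (A * A) * B := by group
    _ = B' * B := by rw [hA]; group

lemma hx4 : x ^ 4 = 1 := by
  have h4 : x ^ 4 = (x * x) * (x * x) := by
    rw [pow_succ, pow_succ, pow_succ, pow_one, mul_assoc]
  rw [h4, hx2]
  calc B' * B * (B' * B) = B' * (B * B') * B := by group
    _ = B' * (B' * B) * B := by rw [hBB']
    _ = (B' * B') * (B * B) := by group
    _ = 1 := by rw [hBsq, hB]; group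

lemma hconj : A * x * A⁻¹ = x⁻¹ := by
  show A * (A * B) * A⁻¹ = (A * B)⁻¹
  rw [hAinv, mul_inv_rev, hAinv, hBinv]
  calc A * (A * B) * A = (A * A) * (B * A) := by group
    _ = B * A := by rw [hA]; group

lemma hconjpow (n : ℕ) : A * x ^ n * A = (x ^ n)⁻¹ := by
  have h := map_pow (MulAut.conj A) x n
  simp only [MulAut.conj_apply, hconj] at h
  rw [hAinv, inv_pow] at h
  exact h

lemma key (i j : ZMod 4) : x ^ (i + j).val = x ^ i.val * x ^ j.val := by
  rw [ZMod.val_add, ← pow_eq_pow_mod _ hx4, pow_add]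

lemma hneg (i : ZMod 4) : x ^ (-i).val = (x ^ i.val)⁻¹ := by
  have h := key i (-i)
  rw [add_neg_cancel, ZMod.val_zero, pow_zero] at h
  exact eq_inv_of_mul_eq_one_right h.symm

lemma hsub (i j : ZMod 4) : x ^ (j - i).val = (x ^ i.val)⁻¹ * x ^ j.val := by
  rw [sub_eq_neg_add, key, hneg]

def gfun : DihedralGroup 4 → D
  | r i => x ^ i.val
  | sr i => A * x ^ i.val

def ghom : DihedralGroup 4 →* D where
  toFun := gfun
  map_one' := by
    rw [one_def]
    show x ^ (0 : ZMod 4).val = 1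
    rw [ZMod.val_zero, pow_zero]
  map_mul' := by
    rintro (i | i) (j | j) <;>
      simp only [r_mul_r, r_mul_sr, sr_mul_r, sr_mul_sr, gfun]
    · exact key i j
    · rw [hsub i j]
      calc A * ((x ^ i.val)⁻¹ * x ^ j.val)
          = A * ((A * x ^ i.val * A) * x ^ j.val) := by rw [hconjpow]
        _ = (A * A) * x ^ i.val * (A * x ^ j.val) := by group
        _ = x ^ i.val * (A * x ^ j.val) := by rw [hA]; group
    · rw [key]; group
    · rw [hsub i j]
      calc (x ^ i.val)⁻¹ * x ^ j.val
          = (A * x ^ i.val * A) * x ^ j.val := by rw [hconjpow]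
        _ = A * x ^ i.val * (A * x ^ j.val) := by group

def f : Fin 4 → DihedralGroup 4 := ![sr 0, sr 1, sr 2, sr 3]

lemma hrels : ∀ w ∈ Drels, FreeGroup.lift f w = 1 := by
  intro w hw
  simp only [Drels, Set.mem_insert_iff, Set.mem_singleton_iff] at hw
  rcases hw with rfl|rfl|rfl|rfl|rfl|rfl|rfl|rfl|rfl|rfl|rfl|rfl <;>
    simp [f] <;> decide

def phi : D →* DihedralGroup 4 := PresentedGroup.toGroup hrels

lemma phi_of (i : Fin 4) : phi (PresentedGroup.of i) = f i :=
  PresentedGroup.toGroup.of hrels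

lemma phi_x : phi x = r 1 := by
  show phi (PresentedGroup.of 0 * PresentedGroup.of 1) = r 1
  rw [map_mul, phi_of, phi_of]
  decide

lemma right_inv : ∀ d, phi (ghom d) = d := by
  rintro (i | i)
  · show phi (x ^ i.val) = r i
    rw [map_pow, phi_x, r_one_pow, ZMod.natCast_rightInverse i]
  · show phi (A * x ^ i.val) = sr i
    rw [map_mul, map_pow, phi_x, r_one_pow]
    have hA0 : phi A = sr 0 := phi_of 0
    rw [hA0, sr_mul_r, ZMod.natCast_rightInverse i, zero_add]

lemma ghA' : ghom (sr 2) = A' := by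
  show A * x ^ (2 : ZMod 4).val = A'
  have hval : (2 : ZMod 4).val = 2 := rfl
  rw [hval]
  have hA'eq : A' = B * A * B := by
    calc A' = (B * B) * A' := by rw [hB]; group
      _ = B * (B * A') := by group
      _ = B * (A * B) := by rw [← hAB_BA']
      _ = B * A * B := by group
  rw [hA'eq]
  calc A * x ^ 2 = A * (A * B * (A * B)) := by rw [pow_two]; rfl
    _ = (A * A) * (B * A * B) := by group
    _ = B * A * B := by rw [hA]; group

lemma ghB' : ghom (sr 3) = B' := by
  show A * x ^ (3 : ZMod 4).val = B'
  have hval : (3 : ZMod 4).val = 3 := rfl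
  rw [hval]
  have hB'eq : B' = A * B * A := by
    calc B' = (A * A) * B' := by rw [hA]; group
      _ = A * (A * B') := by group
      _ = A * (B * A) := by rw [← hBA_AB']
      _ = A * B * A := by group
  have hx3 : x ^ 3 = x⁻¹ := by
    have h : x ^ 3 * x = 1 := by rw [← pow_succ]; exact hx4
    exact eq_inv_of_mul_eq_one_left h
  rw [hx3, hB'eq]
  calc A * x⁻¹ = A * (A * B)⁻¹ := rfl
    _ = A * (B⁻¹ * A⁻¹) := by rw [mul_inv_rev]
    _ = A * (B * A) := by rw [hAinv, hBinv]
    _ = A * B * A := by group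

lemma left_inv_hom : ghom.comp phi = MonoidHom.id D := by
  apply PresentedGroup.ext
  intro i
  simp only [MonoidHom.comp_apply, MonoidHom.id_apply, phi_of]
  fin_cases i
  · show ghom (sr 0) = A
    show A * x ^ (0 : ZMod 4).val = A
    rw [ZMod.val_zero, pow_zero, mul_one]
  · show ghom (sr 1) = B
    show A * x ^ (1 : ZMod 4).val = B
    have hval : (1 : ZMod 4).val = 1 := rfl
    rw [hval, pow_one]
    calc A * (A * B) = (A * A) * B := by group
      _ = B := by rw [hA]; group
  · exact ghA'
  · exact ghB'

def e : D ≃* DihedralGroup 4 where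
  toFun := phi
  invFun := ghom
  left_inv := fun d => congrFun (congrArg (fun h => h.toFun) left_inv_hom) d
  right_inv := right_inv
  map_mul' := phi.map_mul

lemma e_apply (d : D) : e d = phi d := rfl

end DAux

theorem stmt_13 :
    ∃ e : PresentedGroup Drels ≃* DihedralGroup 4,
      e (PresentedGroup.of 0) = sr 0 ∧ e (PresentedGroup.of 1) = sr 1 ∧
      e (PresentedGroup.of 2) = sr 1 * sr 0 * sr 1 ∧
      e (PresentedGroup.of 3) = sr 0 * sr 1 * sr 0 := by
  refine ⟨DAux.e, ?_, ?_, ?_, ?_⟩ <;>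
    · rw [DAux.e_apply, DAux.phi_of]
      decide
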